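/- Let A be a brace with abelian multiplicative group generated as a brace by a single element x. Then for every k ≥ 1, A^k = {x^{*(k-1)} * a : a ∈ A} for k > 1, and the map A^k/A^{k+1} → A^{k+1}/A^{k+2}, a + A^{k+1} ↦ x*a + A^{k+2}, is a well-defined surjective homomorphism of abelian groups. -/

import Mathlib

/-!
For a brace with commutative `∘`, the operation `a * b = -a + a ∘ b - b` is commutative,
associative and distributive. The elements `a` with `a * A ⊆ x * A` form a subbrace containing
`x` (closure under `∘` and inverses comes from `a ∘ b = a + b + a * b`), so `A * A = x * A`.
Induction then gives `A^(n+1) = A * (x^{*n} * A) = x^{*n} * (A * A) = x^{*(n+1)} * A`,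
and the map `a ↦ x * a` sends `A^k` onto `A^(k+1)`, additively since `x * -` is additive.
-/

/-- A skew (left) brace structure on an additive group `(A,+)`: a second group
operation `mul` (with inverse `inv`) sharing the identity `0`, satisfying
`a ∘ (b + c) = a ∘ b - a + a ∘ c`. -/
structure SkewBrace (A : Type*) [AddGroup A] where
  mul : A → A → A
  inv : A → A
  mul_assoc : ∀ a b c, mul (mul a b) c = mul a (mul b c)
  zero_mul : ∀ a, mul 0 a = a
  mul_zero : ∀ a, mul a 0 = a
  inv_mul : ∀ a, mul (inv a) a = 0
  left_compat : ∀ a b c, mul a (b + c) = mul a b + -a + mul a c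

/-- The star operation `a * b = -a + a∘b - b` of a skew brace. -/
def star {A : Type*} [AddGroup A] (S : SkewBrace A) (a b : A) : A :=
  -a + S.mul a b - b

/-- The left series of a skew brace: `lpow S 0 = A^1 = A` and
`lpow S n = A^{n+1} = A * A^n`. -/
def lpow {A : Type*} [AddGroup A] (S : SkewBrace A) : ℕ → AddSubgroup A
  | 0 => ⊤
  | n + 1 => AddSubgroup.closure {z | ∃ a : A, ∃ b ∈ lpow S n, z = star S a b}

/-- `spow S x n` is the `(n+1)`-st `*`-power `x^{*(n+1)}` of `x`. -/
def spow {A : Type*} [AddGroup A] (S : SkewBrace A) (x : A) : ℕ → A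
  | 0 => x
  | n + 1 => star S x (spow S x n)

namespace SkewBrace

variable {A : Type*} [AddCommGroup A] (S : SkewBrace A)

def IsGeneratedBy (x : A) : Prop :=
  ∀ T : Set A, (0 : A) ∈ T →
    (∀ a ∈ T, ∀ b ∈ T, a + b ∈ T) → (∀ a ∈ T, -a ∈ T) →
    (∀ a ∈ T, ∀ b ∈ T, S.mul a b ∈ T) → (∀ a ∈ T, S.inv a ∈ T) →
    x ∈ T → T = Set.univ

lemma mul_neg (a b : A) : S.mul a (-b) = a + a - S.mul a b := by
  have h := S.left_compat a b (-b)
  rw [add_neg_cancel, S.mul_zero] at h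
  calc S.mul a (-b) = (S.mul a b + -a + S.mul a (-b)) - S.mul a b + a := by abel
    _ = a + a - S.mul a b := by rw [← h]; abel

lemma mul_eq_add_add_star (a b : A) : S.mul a b = a + b + star S a b := by
  unfold _root_.star; abel

lemma star_add_right (a b c : A) : star S a (b + c) = star S a b + star S a c := by
  unfold _root_.star; rw [S.left_compat]; abel

lemma star_zero_left (a : A) : star S 0 a = 0 := by
  unfold _root_.star; rw [S.zero_mul]; abel

def starAddHom (a : A) : A →+ A := AddMonoidHom.mk' (star S a) (S.star_add_right a)

@[simp]
lemma starAddHom_apply (a b : A) : S.starAddHom a b = star S a b := rfl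

lemma star_neg_right (a b : A) : star S a (-b) = -star S a b := (S.starAddHom a).map_neg b

lemma star_sub_right (a b c : A) : star S a (b - c) = star S a b - star S a c :=
  (S.starAddHom a).map_sub b c

lemma mul_star (a b c : A) :
    S.mul a (star S b c) = a + a - S.mul a b - S.mul a c + S.mul a (S.mul b c) := by
  unfold _root_.star
  rw [show -b + S.mul b c - c = -b + (S.mul b c + -c) by abel, S.left_compat, S.left_compat,
    S.mul_neg, S.mul_neg]
  abel

section Commutative

variable {S}

lemma star_comm (hcomm : ∀ a b : A, S.mul a b = S.mul b a) (a b : A) :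
    star S a b = star S b a := by
  unfold _root_.star; rw [hcomm]; abel

lemma star_add_left (hcomm : ∀ a b : A, S.mul a b = S.mul b a) (a b c : A) :
    star S (a + b) c = star S a c + star S b c := by
  rw [star_comm hcomm, S.star_add_right, star_comm hcomm c, star_comm hcomm c]

lemma star_neg_left (hcomm : ∀ a b : A, S.mul a b = S.mul b a) (a b : A) :
    star S (-a) b = -star S a b := by
  rw [star_comm hcomm, S.star_neg_right, star_comm hcomm]

lemma star_assoc (hcomm : ∀ a b : A, S.mul a b = S.mul b a) (a b c : A) :
    star S (star S a b) c = star S a (star S b c) := by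
  have h := S.mul_star c a b
  have h' := S.mul_star a b c
  rw [hcomm c a, hcomm c b, hcomm c (S.mul a b), S.mul_assoc] at h
  unfold _root_.star at *
  rw [hcomm _ c, h, h']
  abel

lemma star_left_comm (hcomm : ∀ a b : A, S.mul a b = S.mul b a) (a b c : A) :
    star S a (star S b c) = star S b (star S a c) := by
  rw [← star_assoc hcomm, star_comm hcomm a b, star_assoc hcomm]

lemma star_mul_left (hcomm : ∀ a b : A, S.mul a b = S.mul b a) (a b c : A) :
    star S (S.mul a b) c = star S a c + star S b c + star S a (star S b c) := by
  rw [mul_eq_add_add_star, star_add_left hcomm, star_add_left hcomm, star_assoc hcomm]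

theorem star_mem_range_starAddHom (hcomm : ∀ a b : A, S.mul a b = S.mul b a) {x : A}
    (hx : S.IsGeneratedBy x) (a b : A) : star S a b ∈ (S.starAddHom x).range := by
  set R := (S.starAddHom x).range
  have hR (c : A) : star S x c ∈ R := ⟨c, rfl⟩
  have hT := hx {a | ∀ b, star S a b ∈ R}
    (fun b => by simp only [star_zero_left, zero_mem])
    (fun a ha a' ha' b => by rw [star_add_left hcomm]; exact add_mem (ha b) (ha' b))
    (fun a ha b => by rw [star_neg_left hcomm]; exact neg_mem (ha b))
    (fun a ha a' ha' b => by
      obtain ⟨c, hc⟩ := ha' b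
      rw [star_mul_left hcomm, ← hc, starAddHom_apply, star_left_comm hcomm]
      exact add_mem (add_mem (ha b) (hR c)) (hR _))
    (fun a ha b => by
      obtain ⟨c, hc⟩ := ha b
      have h0 := star_mul_left hcomm (S.inv a) a b
      rw [S.inv_mul, star_zero_left, ← hc, starAddHom_apply, star_left_comm hcomm] at h0
      have h : star S (S.inv a) b = -(star S x c + star S x (star S (S.inv a) c)) := by
        rw [eq_neg_iff_add_eq_zero, ← add_assoc, h0]
      rw [h]
      exact neg_mem (add_mem (hR c) (hR _)))
    (fun b => hR b)
  exact (Set.eq_univ_iff_forall.mp hT a) b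

end Commutative

lemma star_mem_lpow_succ (a : A) {b : A} {n : ℕ} (hb : b ∈ lpow S n) :
    star S a b ∈ lpow S (n + 1) :=
  AddSubgroup.subset_closure ⟨a, b, hb, rfl⟩

lemma spow_mem_lpow (x : A) : ∀ n, spow S x n ∈ lpow S n
  | 0 => AddSubgroup.mem_top x
  | n + 1 => S.star_mem_lpow_succ x (spow_mem_lpow x n)

variable {S}

theorem lpow_succ_eq_range (hcomm : ∀ a b : A, S.mul a b = S.mul b a) {x : A}
    (hx : S.IsGeneratedBy x) (n : ℕ) : lpow S (n + 1) = (S.starAddHom (spow S x n)).range := by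
  refine le_antisymm ?_ ?_
  · induction n with
    | zero =>
      refine (AddSubgroup.closure_le _).mpr ?_
      rintro _ ⟨a, b, -, rfl⟩
      exact star_mem_range_starAddHom hcomm hx a b
    | succ n ih =>
      refine (AddSubgroup.closure_le _).mpr ?_
      rintro _ ⟨a, b, hb, rfl⟩
      obtain ⟨c, rfl⟩ := ih hb
      obtain ⟨d, hd⟩ := star_mem_range_starAddHom hcomm hx a c
      refine ⟨d, ?_⟩
      simp only [starAddHom_apply] at hd ⊢
      rw [spow, star_comm hcomm x, star_assoc hcomm, hd, star_left_comm hcomm]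
  · rintro _ ⟨a, rfl⟩
    rw [starAddHom_apply, star_comm hcomm]
    exact S.star_mem_lpow_succ a (S.spow_mem_lpow x n)

theorem lpow_succ_le_map_starAddHom (hcomm : ∀ a b : A, S.mul a b = S.mul b a) {x : A}
    (hx : S.IsGeneratedBy x) (k : ℕ) : lpow S (k + 1) ≤ (lpow S k).map (S.starAddHom x) := by
  cases k with
  | zero => exact (lpow_succ_eq_range hcomm hx 0).le.trans (AddMonoidHom.range_eq_map _).le
  | succ m =>
    intro c hc
    rw [lpow_succ_eq_range hcomm hx] at hc
    obtain ⟨d, rfl⟩ := hc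
    refine ⟨star S (spow S x m) d, by rw [lpow_succ_eq_range hcomm hx m]; exact ⟨d, rfl⟩, ?_⟩
    simp only [starAddHom_apply, spow, star_assoc hcomm]

end SkewBrace

/-- Let `A` be a brace with abelian multiplicative group generated as a brace
by `x`. Then for `k ≥ 2`, `A^k = {x^{*(k-1)} * a : a ∈ A}`, and for every
`k ≥ 1` the map `A^k/A^{k+1} → A^{k+1}/A^{k+2}`, `a + A^{k+1} ↦ x*a + A^{k+2}`,
is a well-defined surjective homomorphism of abelian groups (stated here via
coset conditions, with `A^k = lpow S (k-1)`). -/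
theorem stmt_11 {A : Type*} [AddCommGroup A] (S : SkewBrace A)
    (hcomm : ∀ a b : A, S.mul a b = S.mul b a) (x : A)
    (hgen : ∀ T : Set A, (0 : A) ∈ T →
      (∀ a ∈ T, ∀ b ∈ T, a + b ∈ T) → (∀ a ∈ T, -a ∈ T) →
      (∀ a ∈ T, ∀ b ∈ T, S.mul a b ∈ T) → (∀ a ∈ T, S.inv a ∈ T) →
      x ∈ T → T = Set.univ) :
    (∀ j : ℕ, 1 ≤ j →
      (lpow S j : Set A) = Set.range (fun a => star S (spow S x (j - 1)) a)) ∧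
    (∀ k : ℕ,
      (∀ a ∈ lpow S k, star S x a ∈ lpow S (k + 1)) ∧
      (∀ a ∈ lpow S k, ∀ b ∈ lpow S k, a - b ∈ lpow S (k + 1) →
        star S x a - star S x b ∈ lpow S (k + 2)) ∧
      (∀ a ∈ lpow S k, ∀ b ∈ lpow S k,
        star S x (a + b) - (star S x a + star S x b) ∈ lpow S (k + 2)) ∧
      (∀ c ∈ lpow S (k + 1), ∃ a ∈ lpow S k, c - star S x a ∈ lpow S (k + 2))) := by
  refine ⟨fun j hj => ?_, fun k => ⟨fun a ha => S.star_mem_lpow_succ x ha,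
    fun a _ b _ hab => ?_, fun a _ b _ => ?_, fun c hc => ?_⟩⟩
  · obtain ⟨n, rfl⟩ := Nat.exists_eq_add_of_le' hj
    rw [SkewBrace.lpow_succ_eq_range hcomm hgen, AddMonoidHom.coe_range, Nat.add_sub_cancel]
    rfl
  · rw [← S.star_sub_right]
    exact S.star_mem_lpow_succ x hab
  · rw [S.star_add_right, sub_self]
    exact zero_mem _
  · obtain ⟨a, ha, rfl⟩ := SkewBrace.lpow_succ_le_map_starAddHom hcomm hgen k hc
    exact ⟨a, ha, by rw [SkewBrace.starAddHom_apply, sub_self]; exact zero_mem _⟩
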